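/- arXiv:2101.08011 — 6 statements merged into one kernel-verified Lean document; each statement's English description precedes it below -/
import Mathlib

section
/- If a resynchronization pair (σ, σ') has t-bounded traversal and a k-bounded origin change, then every cross (X₁, X₂) in σ has width at most t + k: that is, min(|orig(X₁)|, |orig(X₂)|) ≤ t + k. -/
/-- if a resynchronization pair has `t`-bounded traversal, a `k`-bounded origin
change, and the target origins are order-preserving, then every cross has width at most `t + k`. -/
theorem cross_width_le_traversal_add_bound {nu nv t k : ℕ}
    (orig orig' : Fin nv → Fin nu)
    -- t-bounded traversal: every input position y' is traversed by at most t positions y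
    (htrav : ∀ y' : Fin nu,
      {y : Fin nu | ∃ x : Fin nv, orig x = y ∧
          ((y ≤ y' ∧ y' < orig' x) ∨ (y' ≤ y ∧ orig' x < y'))}.ncard ≤ t)
    -- k-bounded origin change: at most k source origins per target origin
    (hk : ∀ z : Fin nu,
      {y : Fin nu | ∃ x : Fin nv, orig x = y ∧ orig' x = z}.ncard ≤ k)
    -- σ' is order-preserving
    (hmono : Monotone orig')
    (X₁ X₂ : Set (Fin nv))
    -- (X₁, X₂) is a cross of σ
    (hcross : ∀ x₁ ∈ X₁, ∀ x₂ ∈ X₂, x₁ < x₂ ∧ orig x₂ < orig x₁) :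
    min (orig '' X₁).ncard (orig '' X₂).ncard ≤ t + k := by
  by_contra h
  push_neg at h
  rw [lt_min_iff] at h
  obtain ⟨hA, hB⟩ := h
  have hA0 : X₁.Nonempty := by
    have : (orig '' X₁).Nonempty := Set.nonempty_of_ncard_ne_zero (by omega)
    exact Set.Nonempty.of_image this
  have hB0 : X₂.Nonempty := by
    have : (orig '' X₂).Nonempty := Set.nonempty_of_ncard_ne_zero (by omega)
    exact Set.Nonempty.of_image this
  obtain ⟨x₁m, hx₁m, hmax⟩ := Set.exists_max_image X₁ orig' (Set.toFinite _) hA0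
  obtain ⟨x₂m, hx₂m, hmin⟩ := Set.exists_min_image X₂ orig' (Set.toFinite _) hB0
  set c' := orig' x₁m with hc'def
  set c := orig' x₂m with hcdef
  have hcc : c' ≤ c := hmono (le_of_lt (hcross x₁m hx₁m x₂m hx₂m).1)
  -- there is an element of X₂ whose origin lies strictly above c
  have hb : ∃ x₂ ∈ X₂, c < orig x₂ := by
    by_contra hcon
    push_neg at hcon
    have hsub : orig '' X₂ ⊆
        {y : Fin nu | ∃ x : Fin nv, orig x = y ∧
          ((y ≤ c ∧ c < orig' x) ∨ (c ≤ y ∧ orig' x < c))} ∪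
        {y : Fin nu | ∃ x : Fin nv, orig x = y ∧ orig' x = c} := by
      rintro b ⟨x₂, hx₂, rfl⟩
      rcases lt_or_ge c (orig' x₂) with h1 | h1
      · exact Or.inl ⟨x₂, rfl, Or.inl ⟨hcon x₂ hx₂, h1⟩⟩
      · exact Or.inr ⟨x₂, rfl, le_antisymm h1 (hmin x₂ hx₂)⟩
    have h1 := Set.ncard_le_ncard hsub (Set.toFinite _)
    have h2 := Set.ncard_union_le
        {y : Fin nu | ∃ x : Fin nv, orig x = y ∧
          ((y ≤ c ∧ c < orig' x) ∨ (c ≤ y ∧ orig' x < c))}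
        {y : Fin nu | ∃ x : Fin nv, orig x = y ∧ orig' x = c}
    have h3 := htrav c
    have h4 := hk c
    omega
  -- there is an element of X₁ whose origin lies strictly below c'
  have ha : ∃ x₁ ∈ X₁, orig x₁ < c' := by
    by_contra hcon
    push_neg at hcon
    have hsub : orig '' X₁ ⊆
        {y : Fin nu | ∃ x : Fin nv, orig x = y ∧
          ((y ≤ c' ∧ c' < orig' x) ∨ (c' ≤ y ∧ orig' x < c'))} ∪
        {y : Fin nu | ∃ x : Fin nv, orig x = y ∧ orig' x = c'} := by
      rintro a ⟨x₁, hx₁, rfl⟩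
      rcases lt_or_ge (orig' x₁) c' with h1 | h1
      · exact Or.inl ⟨x₁, rfl, Or.inr ⟨hcon x₁ hx₁, h1⟩⟩
      · exact Or.inr ⟨x₁, rfl, le_antisymm (hmax x₁ hx₁) h1⟩
    have h1 := Set.ncard_le_ncard hsub (Set.toFinite _)
    have h2 := Set.ncard_union_le
        {y : Fin nu | ∃ x : Fin nv, orig x = y ∧
          ((y ≤ c' ∧ c' < orig' x) ∨ (c' ≤ y ∧ orig' x < c'))}
        {y : Fin nu | ∃ x : Fin nv, orig x = y ∧ orig' x = c'}
    have h3 := htrav c'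
    have h4 := hk c'
    omega
  obtain ⟨x₂b, hx₂b, hbgt⟩ := hb
  obtain ⟨x₁a, hx₁a, halt⟩ := ha
  have := (hcross x₁a hx₁a x₂b hx₂b).2
  exact absurd (lt_trans (lt_trans hbgt this) (lt_of_lt_of_le halt hcc)) (lt_irrefl c)
end

section
/- Let (u, v, orig) be a synchronized pair produced by a run of a K-visiting transducer avoiding inversions, and let C be the large-block threshold constant. If I₁ < I₂ are input intervals and B₁, B₂ are output blocks of I₁ and I₂ respectively, both C-large (i.e., |orig(B₁)| > C and |orig(B₂)| > C), then B₁ < B₂ as output intervals. -/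
/-- `B` is an output block of the input interval `I`: a maximal interval of output
positions whose origins lie in `I`. -/
def OutBlockOf {nu nv : ℕ} (orig : Fin nv → Fin nu)
    (I : Set (Fin nu)) (B : Set (Fin nv)) : Prop :=
  B.OrdConnected ∧ (∀ x ∈ B, orig x ∈ I) ∧
    ∀ B' : Set (Fin nv), B'.OrdConnected → (∀ x ∈ B', orig x ∈ I) → B ⊆ B' → B' = B

/-- in a synchronized pair of a `K`-visiting transducer avoiding inversions,
any two `C`-large output blocks of ordered input intervals `I₁ < I₂` are ordered `B₁ < B₂`.
The inversion-freeness is abstracted (as licensed by the context) via: any `C`-large set of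
output positions with origins in an interval witnesses a productive loop inside it, and no
two ordered loops can have their productive witnesses in reversed output order. -/
theorem large_blocks_are_ordered {nu nv C : ℕ} (orig : Fin nv → Fin nu)
    (Loop : Set (Fin nu) → Prop) (Witness : Set (Fin nu) → Fin nv → Prop)
    -- conclusion of Lemma `bound`: C-large sets witness productive loops
    (hbound : ∀ (I : Set (Fin nu)) (B : Set (Fin nv)),
      (∀ x ∈ B, orig x ∈ I) → C < (orig '' B).ncard →
      ∃ J, J ⊆ I ∧ Loop J ∧ ∃ w : Fin nv, Witness J w ∧ w ∈ B)
    -- no inversion: ordered loops cannot have reversed productive witnesses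
    (hnoinv : ∀ (J₁ J₂ : Set (Fin nu)) (w₁ w₂ : Fin nv),
      Loop J₁ → Loop J₂ → (∀ a ∈ J₁, ∀ b ∈ J₂, a < b) →
      Witness J₁ w₁ → Witness J₂ w₂ → ¬ w₂ < w₁)
    (I₁ I₂ : Set (Fin nu)) (hI : ∀ a ∈ I₁, ∀ b ∈ I₂, a < b)
    (B₁ B₂ : Set (Fin nv))
    (hB₁ : OutBlockOf orig I₁ B₁) (hB₂ : OutBlockOf orig I₂ B₂)
    (hlarge₁ : C < (orig '' B₁).ncard) (hlarge₂ : C < (orig '' B₂).ncard) :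
    ∀ x₁ ∈ B₁, ∀ x₂ ∈ B₂, x₁ < x₂ := by
  obtain ⟨hc₁, hin₁, -⟩ := hB₁
  obtain ⟨hc₂, hin₂, -⟩ := hB₂
  -- no element lies in both blocks
  have hdisj : ∀ y : Fin nv, y ∈ B₁ → y ∈ B₂ → False := fun y h1 h2 =>
    lt_irrefl _ (hI _ (hin₁ y h1) _ (hin₂ y h2))
  obtain ⟨J₁, hJ₁I, hL₁, w₁, hW₁, hw₁⟩ := hbound I₁ B₁ hin₁ hlarge₁
  obtain ⟨J₂, hJ₂I, hL₂, w₂, hW₂, hw₂⟩ := hbound I₂ B₂ hin₂ hlarge₂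
  have hJ : ∀ a ∈ J₁, ∀ b ∈ J₂, a < b := fun a ha b hb => hI a (hJ₁I ha) b (hJ₂I hb)
  have hw : w₁ ≤ w₂ := le_of_not_gt (hnoinv J₁ J₂ w₁ w₂ hL₁ hL₂ hJ hW₁ hW₂)
  intro x₁ hx₁ x₂ hx₂
  by_contra h
  push_neg at h
  rcases le_or_gt x₂ w₁ with hxw | hwx
  · exact hdisj w₁ hw₁ (hc₂.out hx₂ hw₂ ⟨hxw, hw⟩)
  · exact hdisj x₂ (hc₁.out hw₁ hx₁ ⟨le_of_lt hwx, h⟩) hx₂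
end

section
/- Dominant-interval gap bound: let I = I₁ · I₂ be the concatenation of two adjacent input intervals, let B = bout(I), B₁ = bout(I₁), B₂ = bout(I₂) be the respective dominant output intervals of a K-visiting, inversion-free run, with threshold constant C. Then the set B \ (B₁ ∪ B₂) is 4KC-small, i.e., |orig(B \ (B₁ ∪ B₂))| ≤ 4KC. -/
/-- `B` is the dominant output interval of `I`: the smallest output interval containing all
`C`-large output blocks of `I`. -/
def IsDominantOf {nu nv : ℕ} (orig : Fin nv → Fin nu) (C : ℕ)
    (I : Set (Fin nu)) (B : Set (Fin nv)) : Prop :=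
  B.OrdConnected ∧
  (∀ B', OutBlockOf orig I B' → C < (orig '' B').ncard → B' ⊆ B) ∧
  (∀ B'' : Set (Fin nv), B''.OrdConnected →
      (∀ B', OutBlockOf orig I B' → C < (orig '' B').ncard → B' ⊆ B'') → B ⊆ B'')

/-- The maximal output block (for interval `J`) containing `x`. -/
def blockOfAux {nu nv : ℕ} (orig : Fin nv → Fin nu) (J : Set (Fin nu)) (x : Fin nv) :
    Set (Fin nv) :=
  ⋃₀ {T | T.OrdConnected ∧ x ∈ T ∧ ∀ y ∈ T, orig y ∈ J}

lemma blockOf_ordConnected {nu nv : ℕ} (orig : Fin nv → Fin nu) (J : Set (Fin nu))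
    (x : Fin nv) : (blockOfAux orig J x).OrdConnected := by
  refine Set.ordConnected_iff.mpr (fun a ha b hb hab => ?_)
  obtain ⟨T₁, hT₁, haT₁⟩ := ha
  obtain ⟨T₂, hT₂, hbT₂⟩ := hb
  intro z hz
  rcases le_total z x with h | h
  · exact Set.subset_sUnion_of_mem hT₁ (hT₁.1.out haT₁ hT₁.2.1 ⟨hz.1, h⟩)
  · exact Set.subset_sUnion_of_mem hT₂ (hT₂.1.out hT₂.2.1 hbT₂ ⟨h, hz.2⟩)

lemma blockOf_orig {nu nv : ℕ} (orig : Fin nv → Fin nu) (J : Set (Fin nu)) (x : Fin nv) :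
    ∀ y ∈ blockOfAux orig J x, orig y ∈ J := by
  rintro y ⟨T, hT, hyT⟩
  exact hT.2.2 y hyT

lemma mem_blockOf {nu nv : ℕ} (orig : Fin nv → Fin nu) {J : Set (Fin nu)} {x : Fin nv}
    (h : orig x ∈ J) : x ∈ blockOfAux orig J x :=
  ⟨{x}, ⟨Set.ordConnected_singleton, rfl, by simpa⟩, rfl⟩

lemma blockOf_outBlock {nu nv : ℕ} (orig : Fin nv → Fin nu) {J : Set (Fin nu)} {x : Fin nv}
    (h : orig x ∈ J) : OutBlockOf orig J (blockOfAux orig J x) := by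
  refine ⟨blockOf_ordConnected orig J x, blockOf_orig orig J x, ?_⟩
  intro B' hord horigs hsub
  refine subset_antisymm ?_ hsub
  exact Set.subset_sUnion_of_mem ⟨hord, hsub (mem_blockOf orig h), horigs⟩

lemma outBlock_eq_blockOf {nu nv : ℕ} (orig : Fin nv → Fin nu) {J : Set (Fin nu)}
    {D : Set (Fin nv)} {x : Fin nv} (hD : OutBlockOf orig J D) (hx : x ∈ D) :
    D = blockOfAux orig J x := by
  have hsub : D ⊆ blockOfAux orig J x :=
    Set.subset_sUnion_of_mem ⟨hD.1, hx, hD.2.1⟩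
  exact (hD.2.2 _ (blockOf_ordConnected orig J x) (blockOf_orig orig J x) hsub).symm

/-- counting lemma -/
lemma fiber_count {α γ ι : Type*} [Finite α] [Finite γ] [DecidableEq ι] (g : α → γ)
    (f : α → ι) (c : ℕ) (Tf : Finset ι) :
    ∀ S : Set α, (∀ x ∈ S, f x ∈ Tf) →
      (∀ i ∈ Tf, (g '' {x | x ∈ S ∧ f x = i}).ncard ≤ c) →
      (g '' S).ncard ≤ Tf.card * c := by
  induction Tf using Finset.induction_on with
  | empty =>
      intro S hS _
      have : S = ∅ := Set.eq_empty_iff_forall_notMem.mpr (fun x hx => by simpa using hS x hx)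
      simp [this]
  | @insert a s ha ih =>
      intro S hS hc
      set S' : Set α := {x | x ∈ S ∧ f x ≠ a} with hS'
      have hsplit : g '' S ⊆ g '' {x | x ∈ S ∧ f x = a} ∪ g '' S' := by
        rintro _ ⟨x, hx, rfl⟩
        by_cases h : f x = a
        · exact Or.inl ⟨x, ⟨hx, h⟩, rfl⟩
        · exact Or.inr ⟨x, ⟨hx, h⟩, rfl⟩
      have h1 : (g '' {x | x ∈ S ∧ f x = a}).ncard ≤ c := hc a (Finset.mem_insert_self a s)
      have h2 : (g '' S').ncard ≤ s.card * c := by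
        refine ih S' (fun x hx => ?_) (fun i hi => ?_)
        · rcases Finset.mem_insert.mp (hS x hx.1) with h | h
          · exact absurd h hx.2
          · exact h
        · refine le_trans (Set.ncard_le_ncard (Set.image_mono ?_) (Set.toFinite _))
            (hc i (Finset.mem_insert_of_mem hi))
          rintro x ⟨⟨hx, _⟩, hfi⟩
          exact ⟨hx, hfi⟩
      calc (g '' S).ncard ≤ (g '' {x | x ∈ S ∧ f x = a} ∪ g '' S').ncard :=
            Set.ncard_le_ncard hsplit (Set.toFinite _)
        _ ≤ (g '' {x | x ∈ S ∧ f x = a}).ncard + (g '' S').ncard := Set.ncard_union_le _ _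
        _ ≤ c + s.card * c := Nat.add_le_add h1 h2
        _ = (insert a s).card * c := by rw [Finset.card_insert_of_notMem ha]; ring

/-- for adjacent input intervals `I = I₁ · I₂` of a `K`-visiting,
inversion-free run with threshold `C`, the set `bout(I) \ (bout(I₁) ∪ bout(I₂))` is
`4KC`-small.  Inversion-freeness and the visiting bound are abstracted (as licensed by the
context) by hypotheses (a) order of large blocks, (b) the between-lemma, (c) at most `K`
maximal output blocks per interval. -/
theorem dominant_interval_gap_bound {nu nv K C : ℕ} (orig : Fin nv → Fin nu)
    -- (a) C-large output blocks of ordered disjoint intervals are ordered consistently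
    (horder : ∀ (J₁ J₂ : Set (Fin nu)), (∀ a ∈ J₁, ∀ b ∈ J₂, a < b) →
      ∀ B₁' B₂', OutBlockOf orig J₁ B₁' → OutBlockOf orig J₂ B₂' →
        C < (orig '' B₁').ncard → C < (orig '' B₂').ncard →
        ∀ x₁ ∈ B₁', ∀ x₂ ∈ B₂', x₁ < x₂)
    -- (b) between-lemma: positions strictly between two C-large blocks of J with origins
    -- outside J form a 2C-small set
    (hbetween : ∀ (J : Set (Fin nu)) (Bl Br S : Set (Fin nv)),
      OutBlockOf orig J Bl → OutBlockOf orig J Br →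
      C < (orig '' Bl).ncard → C < (orig '' Br).ncard →
      (∀ x ∈ S, (∀ b ∈ Bl, b < x) ∧ (∀ b ∈ Br, x < b) ∧ orig x ∉ J) →
      (orig '' S).ncard ≤ 2 * C)
    -- (c) K-visiting: any interval has at most K nonempty maximal output blocks
    (hvisit : ∀ J : Set (Fin nu),
      {B : Set (Fin nv) | OutBlockOf orig J B ∧ B.Nonempty}.ncard ≤ K)
    (I₁ I₂ : Set (Fin nu)) (hadj : ∀ a ∈ I₁, ∀ b ∈ I₂, a < b)
    (B B₁ B₂ : Set (Fin nv))
    (hB : IsDominantOf orig C (I₁ ∪ I₂) B)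
    (hB₁ : IsDominantOf orig C I₁ B₁) (hB₂ : IsDominantOf orig C I₂ B₂) :
    (orig '' (B \ (B₁ ∪ B₂))).ncard ≤ 4 * K * C := by
  classical
  set J : Set (Fin nu) := I₁ ∪ I₂ with hJdef
  -- large points
  set Lg : Fin nv → Prop :=
    fun p => orig p ∈ J ∧ C < (orig '' blockOfAux orig J p).ncard with hLgdef
  -- the hull of large points contains B
  have hBH : ∀ x ∈ B, ∃ a b, Lg a ∧ Lg b ∧ a ≤ x ∧ x ≤ b := by
    have := hB.2.2 {x | ∃ a b, Lg a ∧ Lg b ∧ a ≤ x ∧ x ≤ b} ?_ ?_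
    · exact fun x hx => this hx
    · refine Set.ordConnected_iff.mpr (fun u hu v hv huv z hz => ?_)
      obtain ⟨a, _, ha, _, hau, _⟩ := hu
      obtain ⟨_, b, _, hb, _, hvb⟩ := hv
      exact ⟨a, b, ha, hb, le_trans hau hz.1, le_trans hz.2 hvb⟩
    · intro D hD hDl x hx
      have heq : D = blockOfAux orig J x := outBlock_eq_blockOf orig hD hx
      have horigx : orig x ∈ J := hD.2.1 x hx
      exact ⟨x, x, ⟨horigx, heq ▸ hDl⟩, ⟨horigx, heq ▸ hDl⟩, le_refl x, le_refl x⟩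
  -- nonempty output blocks of an interval, as a Finset
  let TF : Set (Fin nu) → Finset (Set (Fin nv)) :=
    fun I => (Set.toFinite {D : Set (Fin nv) | OutBlockOf orig I D ∧ D.Nonempty}).toFinset
  have hTFcard : ∀ I, (TF I).card ≤ K := by
    intro I
    rw [← Set.ncard_eq_toFinset_card _ (Set.toFinite _)]
    exact hvisit I
  -- the three parts
  set S0 : Set (Fin nv) := {x | x ∈ B \ (B₁ ∪ B₂) ∧ orig x ∉ J} with hS0def
  set S1 : Set (Fin nv) := {x | x ∈ B \ (B₁ ∪ B₂) ∧ orig x ∈ I₁} with hS1def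
  set S2 : Set (Fin nv) := {x | x ∈ B \ (B₁ ∪ B₂) ∧ orig x ∈ I₂} with hS2def
  have hsplit : B \ (B₁ ∪ B₂) ⊆ S0 ∪ S1 ∪ S2 := by
    intro x hx
    by_cases h1 : orig x ∈ I₁
    · exact Or.inl (Or.inr ⟨hx, h1⟩)
    by_cases h2 : orig x ∈ I₂
    · exact Or.inr ⟨hx, h2⟩
    · exact Or.inl (Or.inl ⟨hx, fun h => h.elim h1 h2⟩)
  -- bound for S1 / S2 (small blocks of I₁ resp. I₂)
  have hsmallbound : ∀ (I : Set (Fin nu)) (Bd : Set (Fin nv)),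
      IsDominantOf orig C I Bd →
      (∀ x, x ∈ {y | y ∈ B \ (B₁ ∪ B₂) ∧ orig y ∈ I} → x ∉ Bd) →
      (orig '' {y | y ∈ B \ (B₁ ∪ B₂) ∧ orig y ∈ I}).ncard ≤ K * C := by
    intro I Bd hBd hnot
    set S : Set (Fin nv) := {y | y ∈ B \ (B₁ ∪ B₂) ∧ orig y ∈ I} with hSdef
    have hfc := fiber_count orig (fun x => blockOfAux orig I x) C (TF I) S ?_ ?_
    · exact le_trans hfc (Nat.mul_le_mul_right C (hTFcard I))
    · intro x hx
      rw [Set.Finite.mem_toFinset]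
      exact ⟨blockOf_outBlock orig hx.2, ⟨x, mem_blockOf orig hx.2⟩⟩
    · intro D hD
      by_cases hne : ({x | x ∈ S ∧ blockOfAux orig I x = D} : Set (Fin nv)).Nonempty
      · obtain ⟨x, hxS, hxD⟩ := hne
        have hxmem : x ∈ D := hxD ▸ mem_blockOf orig hxS.2
        have hDout : OutBlockOf orig I D := ((Set.Finite.mem_toFinset _).mp hD).1
        have hsmall : (orig '' D).ncard ≤ C := by
          by_contra h
          exact hnot x hxS (hBd.2.1 D hDout (lt_of_not_ge h) hxmem)
        refine le_trans (Set.ncard_le_ncard (Set.image_mono ?_) (Set.toFinite _)) hsmall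
        rintro y ⟨hyS, hyD⟩
        exact hyD ▸ mem_blockOf orig hyS.2
      · rw [Set.not_nonempty_iff_eq_empty.mp hne]
        simp
  have hb1 : (orig '' S1).ncard ≤ K * C :=
    hsmallbound I₁ B₁ hB₁ (fun x hx hxB => hx.1.2 (Or.inl hxB))
  have hb2 : (orig '' S2).ncard ≤ K * C :=
    hsmallbound I₂ B₂ hB₂ (fun x hx hxB => hx.1.2 (Or.inr hxB))
  -- bound for S0 (between-lemma)
  have hb0 : (orig '' S0).ncard ≤ K * (2 * C) := by
    -- the greatest large point below x
    set PF : Fin nv → Finset (Fin nv) :=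
      fun x => Finset.univ.filter (fun p => Lg p ∧ p < x) with hPFdef
    set mx : Fin nv → Fin nv :=
      fun x => if h : (PF x).Nonempty then (PF x).max' h else x with hmxdef
    set f0 : Fin nv → Set (Fin nv) := fun x => blockOfAux orig J (mx x) with hf0def
    have hPFne : ∀ x ∈ S0, (PF x).Nonempty := by
      intro x hx
      obtain ⟨a, b, ha, hb, hax, hxb⟩ := hBH x hx.1.1
      have hne : a ≠ x := fun h => hx.2 (h ▸ ha.1)
      refine ⟨a, ?_⟩
      simp only [hPFdef, Finset.mem_filter, Finset.mem_univ, true_and]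
      exact ⟨ha, lt_of_le_of_ne hax hne⟩
    have hmx : ∀ x ∈ S0, Lg (mx x) ∧ mx x < x := by
      intro x hx
      have h := hPFne x hx
      have hmem := (PF x).max'_mem h
      simp only [hPFdef, Finset.mem_filter, Finset.mem_univ, true_and] at hmem
      simpa only [hmxdef, dif_pos h] using hmem
    have hmxmax : ∀ x ∈ S0, ∀ p, Lg p → p < x → p ≤ mx x := by
      intro x hx p hp hpx
      have h := hPFne x hx
      have := (PF x).le_max' p (by
        simp only [hPFdef, Finset.mem_filter, Finset.mem_univ, true_and]; exact ⟨hp, hpx⟩)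
      simpa only [hmxdef, dif_pos h] using this
    -- Claim A: everything in f0 x is below x
    have hA : ∀ x ∈ S0, ∀ b ∈ f0 x, b < x := by
      intro x hx b hb
      have hm := hmx x hx
      have hmem : mx x ∈ f0 x := mem_blockOf orig hm.1.1
      by_contra hbx
      push_neg at hbx
      have hxb : x ≠ b := fun h => hx.2 (h ▸ blockOf_orig orig J (mx x) b hb)
      have hxin : x ∈ f0 x :=
        (blockOf_ordConnected orig J (mx x)).out hmem hb
          ⟨le_of_lt hm.2, hbx⟩
      exact hx.2 (blockOf_orig orig J (mx x) x hxin)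
    have hfc := fiber_count orig f0 (2 * C) (TF J) S0 ?_ ?_
    · exact le_trans hfc (Nat.mul_le_mul_right (2 * C) (hTFcard J))
    · intro x hx
      have hm := hmx x hx
      rw [Set.Finite.mem_toFinset]
      exact ⟨blockOf_outBlock orig hm.1.1, ⟨mx x, mem_blockOf orig hm.1.1⟩⟩
    · intro D hD
      by_cases hne : ({x | x ∈ S0 ∧ f0 x = D} : Set (Fin nv)).Nonempty
      · obtain ⟨x₀, hx₀S, hx₀D⟩ := hne
        have hm₀ := hmx x₀ hx₀S
        -- the least large point above x₀
        have hQne : (Finset.univ.filter (fun q => Lg q ∧ x₀ < q)).Nonempty := by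
          obtain ⟨a, b, ha, hb, hax, hxb⟩ := hBH x₀ hx₀S.1.1
          have hne' : b ≠ x₀ := fun h => hx₀S.2 (h ▸ hb.1)
          refine ⟨b, ?_⟩
          simp only [Finset.mem_filter, Finset.mem_univ, true_and]
          exact ⟨hb, lt_of_le_of_ne hxb (Ne.symm hne')⟩
        set q : Fin nv := (Finset.univ.filter (fun q => Lg q ∧ x₀ < q)).min' hQne with hqdef
        have hq : Lg q ∧ x₀ < q := by
          have := Finset.min'_mem _ hQne
          simpa only [Finset.mem_filter, Finset.mem_univ, true_and] using this
        have hqmin : ∀ p, Lg p → x₀ < p → q ≤ p := by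
          intro p hp hxp
          exact Finset.min'_le _ p (by
            simp only [Finset.mem_filter, Finset.mem_univ, true_and]; exact ⟨hp, hxp⟩)
        set Br : Set (Fin nv) := blockOfAux orig J q with hBrdef
        have hDeq : D = blockOfAux orig J (mx x₀) := hx₀D.symm
        refine hbetween J D Br _ ?_ ?_ ?_ ?_ ?_
        · exact hDeq ▸ blockOf_outBlock orig hm₀.1.1
        · exact blockOf_outBlock orig hq.1.1
        · exact hDeq ▸ hm₀.1.2
        · exact hq.1.2
        · intro x hx
          have hxS : x ∈ S0 := hx.1
          have hxD : f0 x = D := hx.2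
          have hm := hmx x hxS
          refine ⟨fun b hb => hA x hxS b (hxD ▸ hb), ?_, hxS.2⟩
          -- first: x < q
          have hxq : x < q := by
            by_contra h
            push_neg at h  -- q ≤ x
            have hqx : q < x := lt_of_le_of_ne h (fun heq => hxS.2 (heq ▸ hq.1.1))
            have hqmx : q ≤ mx x := hmxmax x hxS q hq.1 hqx
            have hmx₀D : mx x₀ ∈ D := hDeq ▸ mem_blockOf orig hm₀.1.1
            have hmxD : mx x ∈ D := by
              rw [← hxD]; exact mem_blockOf orig hm.1.1
            have hqD : q ∈ D := by
              have hord : D.OrdConnected := hDeq ▸ blockOf_ordConnected orig J (mx x₀)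
              exact hord.out hmx₀D hmxD ⟨le_of_lt (lt_trans hm₀.2 hq.2), hqmx⟩
            exact absurd (hA x₀ hx₀S q (hx₀D ▸ hqD)) (not_lt_of_gt hq.2)
          -- then: x is below all of Br
          intro b hb
          have hbne : b ≠ x := fun h => hxS.2 (h ▸ blockOf_orig orig J q b hb)
          by_contra hxb
          push_neg at hxb  -- b ≤ x
          have hbx : b < x := lt_of_le_of_ne hxb hbne
          have hqBr : q ∈ Br := mem_blockOf orig hq.1.1
          have : x ∈ Br :=
            (blockOf_ordConnected orig J q).out hb hqBr ⟨le_of_lt hbx, le_of_lt hxq⟩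
          exact hxS.2 (blockOf_orig orig J q x this)
      · rw [Set.not_nonempty_iff_eq_empty.mp hne]
        simp
  -- combine
  have himg : orig '' (B \ (B₁ ∪ B₂)) ⊆ orig '' S0 ∪ orig '' S1 ∪ orig '' S2 := by
    rw [← Set.image_union, ← Set.image_union]
    exact Set.image_mono hsplit
  calc (orig '' (B \ (B₁ ∪ B₂))).ncard
      ≤ (orig '' S0 ∪ orig '' S1 ∪ orig '' S2).ncard :=
        Set.ncard_le_ncard himg (Set.toFinite _)
    _ ≤ (orig '' S0 ∪ orig '' S1).ncard + (orig '' S2).ncard := Set.ncard_union_le _ _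
    _ ≤ (orig '' S0).ncard + (orig '' S1).ncard + (orig '' S2).ncard :=
        Nat.add_le_add_right (Set.ncard_union_le _ _) _
    _ ≤ K * (2 * C) + K * C + K * C := by
        exact Nat.add_le_add (Nat.add_le_add hb0 hb1) hb2
    _ = 4 * K * C := by ring
end

section
/- Unique productive straight edge: if a two-way transducer T has no inversion in any successful run, then for every loop I of a successful run ρ, the idempotent flow flow_ρ(I) contains at most one productive straight edge, and if it exists this edge is of type LR (left-to-right). -/
/-- if a two-way transducer has no inversion in any successful run, then for
every loop `I` of a successful run `ρ` the (idempotent) flow of `I` has at most one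
productive straight edge, and such an edge is of type LR.  Runs, loops, flows, edges and the
pumping facts from the context are abstracted as parameters and hypotheses. -/
theorem unique_productive_straight_edge
    (Run Itv Edge : Type)
    (ilt : Itv → Itv → Prop)                      -- order of intervals: I < I'
    (edges : Run → Itv → Set Edge)                -- edges of flow_ρ(I)
    (productive straight isLR : Edge → Prop)
    (Successful : Run → Prop) (IsLoop : Run → Itv → Prop)
    (precedes : Run → Edge → Edge → Prop)         -- run order of witnessing subruns
    -- occurrence order of (witnessing subruns of) distinct edges is total
    (htotal : ∀ ρ (I : Itv) (e f : Edge), e ∈ edges ρ I → f ∈ edges ρ I → e ≠ f →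
      precedes ρ e f ∨ precedes ρ f e)
    -- pumping fact for one productive straight edge: pumping twice yields ordered loop
    -- copies, with the copies of an LR edge in run order I₁ before I₂ (reversed for RL)
    (hpump1 : ∀ ρ I e, Successful ρ → IsLoop ρ I → e ∈ edges ρ I →
      productive e → straight e →
      ∃ ρ' I₁ I₂ e₁ e₂, Successful ρ' ∧ IsLoop ρ' I₁ ∧ IsLoop ρ' I₂ ∧ ilt I₁ I₂ ∧
        e₁ ∈ edges ρ' I₁ ∧ e₂ ∈ edges ρ' I₂ ∧
        productive e₁ ∧ straight e₁ ∧ productive e₂ ∧ straight e₂ ∧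
        (isLR e → precedes ρ' e₁ e₂) ∧ (¬ isLR e → precedes ρ' e₂ e₁))
    -- pumping fact for two productive straight edges: copies of the earlier edge precede
    -- copies of the later edge
    (hpump2 : ∀ ρ I e f, Successful ρ → IsLoop ρ I →
      e ∈ edges ρ I → f ∈ edges ρ I →
      productive e → straight e → productive f → straight f → precedes ρ e f →
      ∃ ρ' I₁ I₂ e₁ e₂ f₁ f₂, Successful ρ' ∧ IsLoop ρ' I₁ ∧ IsLoop ρ' I₂ ∧ ilt I₁ I₂ ∧
        e₁ ∈ edges ρ' I₁ ∧ e₂ ∈ edges ρ' I₂ ∧ f₁ ∈ edges ρ' I₁ ∧ f₂ ∈ edges ρ' I₂ ∧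
        productive e₁ ∧ straight e₁ ∧ productive e₂ ∧ straight e₂ ∧
        productive f₁ ∧ straight f₁ ∧ productive f₂ ∧ straight f₂ ∧
        precedes ρ' e₁ f₁ ∧ precedes ρ' e₁ f₂ ∧ precedes ρ' e₂ f₁ ∧ precedes ρ' e₂ f₂)
    -- T has no inversion in any successful run
    (hnoinv : ∀ ρ, Successful ρ → ¬ ∃ I I' e e', IsLoop ρ I ∧ IsLoop ρ I' ∧ ilt I I' ∧
      e ∈ edges ρ I ∧ e' ∈ edges ρ I' ∧
      productive e ∧ straight e ∧ productive e' ∧ straight e' ∧ precedes ρ e' e) :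
    ∀ ρ I, Successful ρ → IsLoop ρ I →
      (∀ e f, e ∈ edges ρ I → f ∈ edges ρ I →
        productive e → straight e → productive f → straight f → e = f) ∧
      (∀ e, e ∈ edges ρ I → productive e → straight e → isLR e) := by
  intro ρ I hρ hI
  constructor
  · intro e f he hf hpe hse hpf hsf
    by_contra hne
    have key : ∀ a b, a ∈ edges ρ I → b ∈ edges ρ I →
        productive a → straight a → productive b → straight b →
        precedes ρ a b → False := by
      intro a b ha hb hpa hsa hpb hsb hab
      obtain ⟨ρ', I₁, I₂, a₁, a₂, b₁, b₂, hS, hL1, hL2, hlt, ha1, ha2, hb1, hb2,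
        hpa1, hsa1, hpa2, hsa2, hpb1, hsb1, hpb2, hsb2, _, _, h21, _⟩ :=
        hpump2 ρ I a b hρ hI ha hb hpa hsa hpb hsb hab
      exact hnoinv ρ' hS ⟨I₁, I₂, b₁, a₂, hL1, hL2, hlt, hb1, ha2,
        hpb1, hsb1, hpa2, hsa2, h21⟩
    rcases htotal ρ I e f he hf hne with h | h
    · exact key e f he hf hpe hse hpf hsf h
    · exact key f e hf he hpf hsf hpe hse h
  · intro e he hpe hse
    by_contra hLR
    obtain ⟨ρ', I₁, I₂, e₁, e₂, hS, hL1, hL2, hlt, he1, he2,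
      hp1, hs1, hp2, hs2, _, h21⟩ := hpump1 ρ I e hρ hI he hpe hse
    exact hnoinv ρ' hS ⟨I₁, I₂, e₁, e₂, hL1, hL2, hlt, he1, he2,
      hp1, hs1, hp2, hs2, h21 hLR⟩
end

section
/- Cross monotonicity under bounded origin change: let σ = (u,v,orig) contain a cross (X₁,X₂) of width h, where all positions of X₁ ∪ X₂ have origins whose change is governed by a partial bijection with at most k t-separated pairs for t = max(orig(X₂)). Then for any σ' = (u,v,orig') obtained by applying the partial bijection (orig'(x) determined by orig(x) whenever defined) there exist X₁' ⊆ X₁, X₂' ⊆ X₂ forming, with respect to orig', sets with X₁' < X₂' and orig'(X₂') ≤ t < orig'(X₁'), and such that (X₁',X₂') is a cross of σ' of width at least h − k. -/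
/-- cross monotonicity under a bounded origin change.  If `σ = (u,v,orig)`
contains a cross `(X₁,X₂)` of width `h`, `orig' = β ∘ orig` for a (partial) bijection `β`
having at most `k` `t`-separated pairs for `t = max(orig(X₂))`, then removing from `X₁, X₂`
the positions whose origin is moved across `t` yields a cross `(X₁',X₂')` of `σ'` of width
at least `h − k`, with `X₁' < X₂'` and `orig'(X₂') ≤ t < orig'(X₁')`. -/
theorem cross_monotone_under_bounded_origin_change {nu nv h k : ℕ}
    (orig orig' : Fin nv → Fin nu) (β : Fin nu → Fin nu)
    (hβinj : Function.Injective β)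
    (hcomp : ∀ x, orig' x = β (orig x))
    (t : Fin nu)
    -- β has at most k t-separated pairs (y, β y)
    (hsep : {y : Fin nu | (y ≤ t ∧ t < β y) ∨ (β y ≤ t ∧ t < y)}.ncard ≤ k)
    (X₁ X₂ : Set (Fin nv))
    -- (X₁, X₂) is a cross of σ of width at least h
    (hcross : ∀ x₁ ∈ X₁, ∀ x₂ ∈ X₂, x₁ < x₂ ∧ orig x₂ < orig x₁)
    -- t = max (orig X₂), so orig(X₂) ≤ t < orig(X₁)
    (ht₂ : ∀ x ∈ X₂, orig x ≤ t) (ht₁ : ∀ x ∈ X₁, t < orig x)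
    (hw₁ : h ≤ (orig '' X₁).ncard) (hw₂ : h ≤ (orig '' X₂).ncard) :
    ∀ X₁' X₂' : Set (Fin nv),
      X₁' = X₁ \ {x | (orig x ≤ t ∧ t < β (orig x)) ∨ (β (orig x) ≤ t ∧ t < orig x)} →
      X₂' = X₂ \ {x | (orig x ≤ t ∧ t < β (orig x)) ∨ (β (orig x) ≤ t ∧ t < orig x)} →
      (∀ x₁ ∈ X₁', ∀ x₂ ∈ X₂', x₁ < x₂ ∧ orig' x₂ < orig' x₁) ∧
      (∀ x ∈ X₂', orig' x ≤ t) ∧ (∀ x ∈ X₁', t < orig' x) ∧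
      h - k ≤ (orig' '' X₁').ncard ∧ h - k ≤ (orig' '' X₂').ncard := by
  intro X₁' X₂' hX₁' hX₂'
  set S : Set (Fin nu) := {y : Fin nu | (y ≤ t ∧ t < β y) ∨ (β y ≤ t ∧ t < y)} with hS
  -- orig' ≤ t on X₂'
  have h2 : ∀ x ∈ X₂', orig' x ≤ t := by
    intro x hx
    rw [hX₂'] at hx
    obtain ⟨hx2, hns⟩ := hx
    have h1 := ht₂ x hx2
    rw [hcomp]
    by_contra hc
    push_neg at hc
    exact hns (Or.inl ⟨h1, hc⟩)
  have h1 : ∀ x ∈ X₁', t < orig' x := by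
    intro x hx
    rw [hX₁'] at hx
    obtain ⟨hx1, hns⟩ := hx
    have ht := ht₁ x hx1
    rw [hcomp]
    by_contra hc
    push_neg at hc
    exact hns (Or.inr ⟨hc, ht⟩)
  have key : ∀ (X X' : Set (Fin nv)),
      X' = X \ {x | (orig x ≤ t ∧ t < β (orig x)) ∨ (β (orig x) ≤ t ∧ t < orig x)} →
      h ≤ (orig '' X).ncard → h - k ≤ (orig' '' X').ncard := by
    intro X X' hX' hw
    have hsub : (orig '' X) \ S ⊆ orig '' X' := by
      rintro y ⟨⟨x, hxX, rfl⟩, hyS⟩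
      refine ⟨x, ?_, rfl⟩
      rw [hX']
      exact ⟨hxX, hyS⟩
    have himg : orig' '' X' = β '' (orig '' X') := by
      rw [Set.image_image]
      exact Set.image_congr (fun x _ => hcomp x)
    have hcard : (orig' '' X').ncard = (orig '' X').ncard := by
      rw [himg, Set.ncard_image_of_injective _ hβinj]
    have h3 : ((orig '' X) \ S).ncard ≤ (orig '' X').ncard :=
      Set.ncard_le_ncard hsub (Set.toFinite _)
    have h4 : (orig '' X).ncard ≤ ((orig '' X) \ S).ncard + S.ncard := by
      calc (orig '' X).ncard ≤ (((orig '' X) \ S) ∪ S).ncard :=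
            Set.ncard_le_ncard (fun y hy => by
              by_cases hyS : y ∈ S
              · exact Or.inr hyS
              · exact Or.inl ⟨hy, hyS⟩) (Set.toFinite _)
        _ ≤ ((orig '' X) \ S).ncard + S.ncard := Set.ncard_union_le _ _
    rw [hcard]
    omega
  refine ⟨?_, h2, h1, key X₁ X₁' hX₁' hw₁, key X₂ X₂' hX₂' hw₂⟩
  intro x₁ hx₁ x₂ hx₂
  have hxa : x₁ ∈ X₁ := by rw [hX₁'] at hx₁; exact hx₁.1
  have hxb : x₂ ∈ X₂ := by rw [hX₂'] at hx₂; exact hx₂.1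
  exact ⟨(hcross x₁ hxa x₂ hxb).1, lt_of_le_of_lt (h2 x₂ hx₂) (h1 x₁ hx₁)⟩
end

section
/- PSPACE-hardness gadget correctness: let L ⊆ Γ* be any language and Σ a two-letter alphabet disjoint from Γ, and consider the transduction R = {(w·a₁⋯aₙ, aₙ⋯a₁) : w ∈ L, a₁,…,aₙ ∈ Σ, n ≥ 0}. If L = ∅ then R = ∅ and R is trivially order-preserving (hence has cross-width 0); if L ≠ ∅ then R contains, for every k, a pair whose natural origin mapping (each output letter aᵢ originating at its input position) has a cross of width k — hence R with these origins has bounded cross-width if and only if L = ∅. -/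
/-!
Reading the reversed suffix backwards makes the origin map strictly decreasing, so any earlier
block of output positions crosses any later one. For `L ≠ ∅`, a word of `L` followed by `2k`
letters gives a cross whose two halves each have `k` distinct origins; this rules out bounded
cross-width, while for `L = ∅` the relation is empty.
-/

section Cross

variable {n : ℕ}

def IsCross (orig : Fin n → ℕ) (X₁ X₂ : Set (Fin n)) : Prop :=
  ∀ x₁ ∈ X₁, ∀ x₂ ∈ X₂, x₁ < x₂ ∧ orig x₂ < orig x₁

noncomputable def crossWidth (orig : Fin n → ℕ) (X₁ X₂ : Set (Fin n)) : ℕ :=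
  min (orig '' X₁).ncard (orig '' X₂).ncard

lemma ncard_image_range_of_strictAnti {k : ℕ} {orig : Fin n → ℕ} (horig : StrictAnti orig)
    {g : Fin k → Fin n} (hg : Function.Injective g) : (orig '' Set.range g).ncard = k := by
  rw [← Set.range_comp, Set.ncard_range_of_injective (horig.injective.comp hg), Nat.card_fin]

lemma exists_isCross_le_crossWidth_of_strictAnti {k : ℕ} (hk : k + k ≤ n) {orig : Fin n → ℕ}
    (horig : StrictAnti orig) :
    ∃ X₁ X₂ : Set (Fin n), IsCross orig X₁ X₂ ∧ k ≤ crossWidth orig X₁ X₂ := by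
  let first : Fin k → Fin n := fun i => ⟨i, by omega⟩
  let last : Fin k → Fin n := fun i => ⟨n - k + i, by omega⟩
  have first_injective : Function.Injective first := fun i j h => by
    simpa [first, Fin.ext_iff] using h
  have last_injective : Function.Injective last := fun i j h => by
    simpa [last, Fin.ext_iff] using h
  refine ⟨Set.range first, Set.range last, ?_, ?_⟩
  · rintro _ ⟨i, rfl⟩ _ ⟨j, rfl⟩
    have first_lt_last : first i < last j := Fin.lt_def.2 (by simp only [first, last]; omega)
    exact ⟨first_lt_last, horig first_lt_last⟩
  · simp only [crossWidth, ncard_image_range_of_strictAnti horig first_injective,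
      ncard_image_range_of_strictAnti horig last_injective, min_self, le_refl]

end Cross

lemma strictAnti_reverseOrigin (m n : ℕ) : StrictAnti fun x : Fin n => m + (n - 1 - x.1) :=
  fun x y hxy => show m + (n - 1 - y.1) < m + (n - 1 - x.1) by
    have : x.1 < y.1 := hxy
    omega

/-- correctness of the PSPACE-hardness gadget.  For
`R = {(w·a₁⋯aₙ, aₙ⋯a₁) : w ∈ L, aᵢ ∈ Σ}` with natural origins
(the j-th output letter `a_{n+1−j}` originating at input position `m + (n+1−j)`,
i.e. 0-indexed output position `j` has origin `m + (n − 1 − j)`):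
if `L = ∅` then `R = ∅`; if `L ≠ ∅` then `R` admits crosses of every width `k`;
hence `R` with these origins has bounded cross-width iff `L = ∅`. -/
theorem pspace_gadget_correctness (Γ : Type) (L : Set (List Γ)) :
    -- (1) if L is empty then R is empty
    (L = ∅ →
      {p : List (Γ ⊕ Bool) × List Bool |
        ∃ w ∈ L, ∃ as : List Bool,
          p = (w.map Sum.inl ++ as.map Sum.inr, as.reverse)} = ∅) ∧
    -- (2) if L is nonempty then R has crosses of every width k
    (L ≠ ∅ → ∀ k : ℕ, ∃ w ∈ L, ∃ as : List Bool, ∃ X₁ X₂ : Set (Fin as.length),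
      (∀ x₁ ∈ X₁, ∀ x₂ ∈ X₂, x₁ < x₂ ∧
          w.length + (as.length - 1 - x₂.1) < w.length + (as.length - 1 - x₁.1)) ∧
      k ≤ min
        ((fun x : Fin as.length => w.length + (as.length - 1 - x.1)) '' X₁).ncard
        ((fun x : Fin as.length => w.length + (as.length - 1 - x.1)) '' X₂).ncard) ∧
    -- (3) hence: bounded cross-width iff L = ∅
    ((∃ c : ℕ, ∀ w ∈ L, ∀ as : List Bool, ∀ X₁ X₂ : Set (Fin as.length),
        (∀ x₁ ∈ X₁, ∀ x₂ ∈ X₂, x₁ < x₂ ∧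
            w.length + (as.length - 1 - x₂.1) < w.length + (as.length - 1 - x₁.1)) →
        min
          ((fun x : Fin as.length => w.length + (as.length - 1 - x.1)) '' X₁).ncard
          ((fun x : Fin as.length => w.length + (as.length - 1 - x.1)) '' X₂).ncard ≤ c)
      ↔ L = ∅) := by
  have wide_crosses : L ≠ ∅ → ∀ k : ℕ, ∃ w ∈ L, ∃ as : List Bool,
      ∃ X₁ X₂ : Set (Fin as.length),
        IsCross (fun x => w.length + (as.length - 1 - x.1)) X₁ X₂ ∧
        k ≤ crossWidth (fun x => w.length + (as.length - 1 - x.1)) X₁ X₂ := by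
    intro hL k
    obtain ⟨w, hw⟩ := Set.nonempty_iff_ne_empty.2 hL
    exact ⟨w, hw, List.replicate (k + k) false,
      exists_isCross_le_crossWidth_of_strictAnti (by simp) (strictAnti_reverseOrigin _ _)⟩
  refine ⟨fun hL => by simp [hL], wide_crosses,
    ⟨fun ⟨c, bounded⟩ => ?_, fun hL => ⟨0, by simp [hL]⟩⟩⟩
  by_contra hL
  obtain ⟨w, hw, as, X₁, X₂, hcross, hwidth⟩ := wide_crosses hL (c + 1)
  have := bounded w hw as X₁ X₂ hcross
  exact absurd (hwidth.trans this) (Nat.not_succ_le_self c)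
end
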